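/- arXiv:1903.03869 — 2 statements merged into one kernel-verified Lean document; each statement's English description precedes it below -/
import Mathlib

section
/- Suppose a formal power series ψ(x) = (2^{2-χ+K²}/(1-x²)^{χ_L})·[(1+x)^m + ε(1-x)^m] where ε = (-1)^{c₁K + χ}, m, χ, K², χ_L are integers, and let φ(x) = 2^{3-χ+K²}(1+x)^m/(1-x²)^{χ_L}. If one extracts only the coefficients of x^n with n ≡ -c₁² - 3χ (mod 4) (where c₁K ≡ c₁² mod 2), then the resulting sub-series of ψ and of φ agree: Σ_{n ≡ r (4)} ψ_n x^n = Σ_{n ≡ r (4)} φ_n x^n with r = -c₁² - 3χ mod 4. -/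
/-!
Write `F = 2^{2-χ+K²} (1-x²)^{-χ_L} (1+x)^m`. Its prefactor is even in `x`, so
`ψ(x) = F(x) + ε F(-x)` and `φ = 2F`. The `n`-th coefficient of `ψ` is `(1 + ε (-1)^n) F_n`,
and on the residue class `n ≡ -c₁² - 3χ (mod 4)` the parity hypothesis makes
`n + c₁K + χ` even, i.e. `ε (-1)^n = 1`.
-/

noncomputable def xL : LaurentSeries ℚ := (PowerSeries.X : PowerSeries ℚ)

open HahnSeries
open scoped PowerSeries

namespace LaurentSeries

section Ring

variable {R : Type*} [Ring R]

noncomputable def evalNegHom : R⸨X⸩ →+* R⸨X⸩ where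
  toFun f :=
    { coeff := fun n => n.negOnePow • f.coeff n
      isPWO_support' := f.isPWO_support.mono fun n hn h => hn (by simp [h]) }
  map_one' := by
    ext n
    by_cases h : n = 0 <;> simp [coeff_one, h]
  map_mul' f g := by
    ext n
    change n.negOnePow • (f * g).coeff n = _
    rw [coeff_mul, coeff_mul, Finset.smul_sum]
    refine Finset.sum_congr (by ext; simp [smul_eq_zero_iff_eq]) fun ij hij => ?_
    rw [← (Finset.mem_antidiagonal.mp hij).2.2, Int.negOnePow_add, smul_mul_smul]
  map_zero' := by ext; simp
  map_add' f g := by ext; simp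

@[simp] theorem coeff_evalNegHom (f : R⸨X⸩) (n : ℤ) :
    (evalNegHom f).coeff n = n.negOnePow • f.coeff n :=
  rfl

@[simp] theorem evalNegHom_X :
    evalNegHom ((PowerSeries.X : R⟦X⟧) : R⸨X⸩) = -(PowerSeries.X : R⟦X⟧) := by
  ext n
  rw [PowerSeries.coe_X]
  by_cases h : n = 1
  · simp [h]
  · simp [coeff_single_of_ne h]

end Ring

theorem coeff_add_neg_one_zpow_mul_evalNegHom {K : Type*} [Field K] (f : K⸨X⸩) {k n : ℤ}
    (h : Even (n + k)) : (f + (-1) ^ k * evalNegHom f).coeff n = 2 * f.coeff n := by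
  have hsign : ((-1 : K⸨X⸩) ^ k * evalNegHom f).coeff n = f.coeff n := by
    rw [← map_one C, ← map_neg, ← map_zpow₀, C_mul_eq_smul, coeff_smul, coeff_evalNegHom,
      Units.smul_def, zsmul_eq_mul, Int.cast_negOnePow, smul_eq_mul, ← mul_assoc,
      ← zpow_add₀ (neg_ne_zero.mpr one_ne_zero), add_comm, h.neg_one_zpow, one_mul]
  rw [coeff_add, hsign, two_mul]

end LaurentSeries

open LaurentSeries

theorem filtered_psi_eq_filtered_phi
    (χ Ksq χL m c1sq c1K : ℤ) (hpar : c1K ≡ c1sq [ZMOD 2]) :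
    ∀ n : ℤ, ((n : ZMod 4) = ((-c1sq - 3 * χ : ℤ) : ZMod 4)) →
      HahnSeries.coeff
        ((2 : LaurentSeries ℚ) ^ (2 - χ + Ksq) * (1 - xL ^ 2) ^ (-χL) *
          ((1 + xL) ^ m + (-1 : LaurentSeries ℚ) ^ (c1K + χ) * (1 - xL) ^ m)) n =
      HahnSeries.coeff
        ((2 : LaurentSeries ℚ) ^ (3 - χ + Ksq) * (1 - xL ^ 2) ^ (-χL) * (1 + xL) ^ m) n := by
  intro n hn
  set A : LaurentSeries ℚ := (2 : LaurentSeries ℚ) ^ (2 - χ + Ksq) * (1 - xL ^ 2) ^ (-χL)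
  have hA : evalNegHom A = A := by
    simp only [A, xL, map_mul, map_zpow₀, map_sub, map_one, map_pow, evalNegHom_X, neg_sq,
      map_ofNat]
  have hψ : A * ((1 + xL) ^ m + (-1) ^ (c1K + χ) * (1 - xL) ^ m) =
      A * (1 + xL) ^ m + (-1) ^ (c1K + χ) * evalNegHom (A * (1 + xL) ^ m) := by
    simp only [map_mul, hA, map_zpow₀, map_add, map_one, xL, evalNegHom_X, ← sub_eq_add_neg]
    ring
  have hφ : (2 : LaurentSeries ℚ) ^ (3 - χ + Ksq) * (1 - xL ^ 2) ^ (-χL) * (1 + xL) ^ m =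
      2 * (A * (1 + xL) ^ m) := by
    have h2 : (2 : LaurentSeries ℚ) ≠ 0 := by
      rw [← map_ofNat C 2]
      exact C_ne_zero two_ne_zero
    rw [show 3 - χ + Ksq = 1 + (2 - χ + Ksq) by ring, zpow_add₀ h2, zpow_one]
    ring
  have hparity : Even (n + (c1K + χ)) := by
    have h4 : n % 4 = (-c1sq - 3 * χ) % 4 := (ZMod.intCast_eq_intCast_iff _ _ _).mp hn
    have h2 : c1K % 2 = c1sq % 2 := hpar
    rw [Int.even_iff]
    omega
  rw [hψ, hφ, coeff_add_neg_one_zpow_mul_evalNegHom _ hparity, two_mul, two_mul, coeff_add]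
end

section
/- Blow-up formula for the generating function ψ: define for integers and formal variables ψ_{S,L,c₁}(x) = (2^{2-χ+K²}/(1-x²)^{χ(L)}) Σ_a SW(a)(-1)^{a·c₁}(1+x)^{(K-a)(L-K)}(1-x)^{a(L-K)} where the sum is over a finite set of classes a with pairing data. If on the blow-up one replaces: χ ↦ χ, K ↦ K+E with E² = -1, E·(pullback classes) = 0, χ(L̃) = χ(L) - (ℓ+1)ℓ/2, L̃ = L - ℓE, c̃₁ = c₁ - kE, and the basic classes become {a, a+E} each with the same SW(a), then ψ_{S̃,L̃,c̃₁}(x) = (1/2)(1-x²)^{ℓ(ℓ+1)/2}[(1+x)^{ℓ+1} + (-1)^k (1-x)^{ℓ+1}]·ψ_{S,L,c₁}(x). -/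
noncomputable def xLS : LaurentSeries ℚ := (PowerSeries.X : PowerSeries ℚ)

/- Blow-up formula for ψ_{S,L,c₁}(x).  Abstract data: a finite set ι of basic classes a,
weights SW(a), and integer pairings ac1 a = a·c₁, KaLK a = (K-a)(L-K), aLK a = a(L-K);
ψ_{S,L,c₁}(x) = 2^{2-χ+K²}/(1-x²)^{χ(L)} Σ_a SW(a)(-1)^{a·c₁}(1+x)^{(K-a)(L-K)}(1-x)^{a(L-K)}.
On the blow-up (K̃ = K+E, L̃ = L-ℓE, c̃₁ = c₁-kE, E² = -1, E orthogonal to pullbacks):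
χ̃ = χ, K̃² = K²-1, χ(L̃) = χ(L) - ℓ(ℓ+1)/2, and the basic classes are {a, a+E} with the
same SW(a); the pairings become, for ã = a: ã·c̃₁ = a·c₁, (K̃-ã)(L̃-K̃) = (K-a)(L-K)+ℓ+1,
ã(L̃-K̃) = a(L-K); and for ã = a+E: ã·c̃₁ = a·c₁+k, (K̃-ã)(L̃-K̃) = (K-a)(L-K),
ã(L̃-K̃) = a(L-K)+ℓ+1.  The claim is
ψ̃ = (1/2)(1-x²)^{ℓ(ℓ+1)/2}[(1+x)^{ℓ+1} + (-1)ᵏ(1-x)^{ℓ+1}]·ψ. -/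
theorem blowup_formula (ι : Type*) [Fintype ι]
    (SW ac1 KaLK aLK : ι → ℤ) (χ Ksq χL : ℤ) (ℓ : ℕ) (k : ℤ) :
    (2 : LaurentSeries ℚ) ^ (2 - χ + (Ksq - 1)) *
        (1 - xLS ^ 2) ^ (-(χL - (ℓ * (ℓ + 1) / 2 : ℕ))) *
        (∑ a, (SW a : LaurentSeries ℚ) *
          ((-1 : LaurentSeries ℚ) ^ (ac1 a) *
              (1 + xLS) ^ (KaLK a + (ℓ + 1 : ℤ)) * (1 - xLS) ^ (aLK a) +
            (-1 : LaurentSeries ℚ) ^ (ac1 a + k) *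
              (1 + xLS) ^ (KaLK a) * (1 - xLS) ^ (aLK a + (ℓ + 1 : ℤ)))) =
      (2 : LaurentSeries ℚ)⁻¹ * (1 - xLS ^ 2) ^ ((ℓ * (ℓ + 1) / 2 : ℕ)) *
        ((1 + xLS) ^ (ℓ + 1) + (-1 : LaurentSeries ℚ) ^ k * (1 - xLS) ^ (ℓ + 1)) *
        ((2 : LaurentSeries ℚ) ^ (2 - χ + Ksq) * (1 - xLS ^ 2) ^ (-χL) *
          ∑ a, (SW a : LaurentSeries ℚ) * (-1 : LaurentSeries ℚ) ^ (ac1 a) *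
            (1 + xLS) ^ (KaLK a) * (1 - xLS) ^ (aLK a)) := by
  have h1 : (1 + xLS : LaurentSeries ℚ) ≠ 0 := by
    intro h
    have := congrArg (fun f : LaurentSeries ℚ => f.coeff 0) h
    simp [xLS] at this
  have h2 : (1 - xLS : LaurentSeries ℚ) ≠ 0 := by
    intro h
    have := congrArg (fun f : LaurentSeries ℚ => f.coeff 0) h
    simp [xLS] at this
  have hs : (1 - xLS ^ 2 : LaurentSeries ℚ) ≠ 0 := by
    have : (1 - xLS ^ 2 : LaurentSeries ℚ) = (1 + xLS) * (1 - xLS) := by ring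
    rw [this]; exact mul_ne_zero h1 h2
  have h2t : (2 : LaurentSeries ℚ) ≠ 0 := by
    intro h
    have h' : (1 + 1 : LaurentSeries ℚ) = 0 := by rw [one_add_one_eq_two]; exact h
    have := congrArg (fun f : LaurentSeries ℚ => f.coeff 0) h'
    simp at this
  have hn : (-1 : LaurentSeries ℚ) ≠ 0 := by
    exact neg_ne_zero.mpr one_ne_zero
  set m : ℕ := ℓ * (ℓ + 1) / 2 with hm
  have e1 : (2 : LaurentSeries ℚ) ^ (2 - χ + (Ksq - 1)) =
      (2 : LaurentSeries ℚ)⁻¹ * (2 : LaurentSeries ℚ) ^ (2 - χ + Ksq) := by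
    rw [show (2 - χ + (Ksq - 1)) = (-1) + (2 - χ + Ksq) by ring, zpow_add₀ h2t, zpow_neg_one]
  have e2 : (1 - xLS ^ 2 : LaurentSeries ℚ) ^ (-(χL - (m : ℤ))) =
      (1 - xLS ^ 2) ^ m * (1 - xLS ^ 2) ^ (-χL) := by
    rw [show (-(χL - (m : ℤ))) = (m : ℤ) + (-χL) by ring, zpow_add₀ hs, zpow_natCast]
  rw [e1, e2]
  rw [mul_assoc, mul_assoc, mul_assoc, mul_assoc, mul_assoc, Finset.mul_sum, Finset.mul_sum,
    Finset.mul_sum, Finset.mul_sum, Finset.mul_sum, Finset.mul_sum, Finset.mul_sum,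
    Finset.mul_sum]
  apply Finset.sum_congr rfl
  intro a _
  have f1 : (1 + xLS : LaurentSeries ℚ) ^ (KaLK a + (ℓ + 1 : ℤ)) =
      (1 + xLS) ^ (KaLK a) * (1 + xLS) ^ (ℓ + 1) := by
    rw [zpow_add₀ h1, show ((ℓ : ℤ) + 1) = ((ℓ + 1 : ℕ) : ℤ) by push_cast; ring, zpow_natCast]
  have f2 : (1 - xLS : LaurentSeries ℚ) ^ (aLK a + (ℓ + 1 : ℤ)) =
      (1 - xLS) ^ (aLK a) * (1 - xLS) ^ (ℓ + 1) := by
    rw [zpow_add₀ h2, show ((ℓ : ℤ) + 1) = ((ℓ + 1 : ℕ) : ℤ) by push_cast; ring, zpow_natCast]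
  have f3 : (-1 : LaurentSeries ℚ) ^ (ac1 a + k) =
      (-1 : LaurentSeries ℚ) ^ (ac1 a) * (-1) ^ k := zpow_add₀ hn _ _
  rw [f1, f2, f3]
  ring
end
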